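/- Transfer of the closing property to conics tangent at the same point: Let W ⊆ ℝ³ be a 2-dimensional subspace (a line ℓ) and R ∈ W a nonzero vector with ⟨R,R⟩ = 0 and ⟨R,X⟩ = 0 for all X ∈ W (ℓ is tangent to the conic C at R). Let P₁,…,P_{2n} ∈ W with ⟨Pᵢ,Pᵢ⟩ ≠ 0 have the closing property with respect to the Minkowski form. Let B be any nondegenerate symmetric bilinear form on ℝ³ with B(R,R) = 0 and B(R,X) = 0 for all X ∈ W (the conic D_B is tangent to ℓ at R) such that B(Pᵢ,Pᵢ) ≠ 0 for all i. Then P₁,…,P_{2n} have the closing property with respect to B. -/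

import Mathlib

/-- Minkowski product on ℝ³. -/
def mink (X Y : Fin 3 → ℝ) : ℝ := X 0 * Y 0 + X 1 * Y 1 - X 2 * Y 2

/-- The reversion map with respect to the (bilinear) form `B` in the point `P`
(with `B P P ≠ 0`): `M_P^B X = B(P,P)X − 2B(X,P)P`. -/
def revB (B : (Fin 3 → ℝ) → (Fin 3 → ℝ) → ℝ) (P X : Fin 3 → ℝ) : Fin 3 → ℝ :=
  B P P • X - (2 * B X P) • P

/-- `chainB B n P X = (M_{P n}^B ∘ ⋯ ∘ M_{P 1}^B) X`, the composition of the reversions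
with respect to `B` in `P 0, …, P (n-1)`, applied in this order. -/
def chainB (B : (Fin 3 → ℝ) → (Fin 3 → ℝ) → ℝ) :
    (n : ℕ) → (Fin n → (Fin 3 → ℝ)) → (Fin 3 → ℝ) → (Fin 3 → ℝ)
  | 0, _, X => X
  | n + 1, P, X => revB B (P (Fin.last n)) (chainB B n (fun i => P i.castSucc) X)

/-- The points `P 0, …, P (n-1)` have the closing property with respect to the form `B`
iff `M_{P n}^B ∘ ⋯ ∘ M_{P 1}^B` is a nonzero scalar multiple of the identity. For
`B = mink` this is the closing property with respect to the conic `C`. -/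
def closesB (B : (Fin 3 → ℝ) → (Fin 3 → ℝ) → ℝ) (n : ℕ) (P : Fin n → (Fin 3 → ℝ)) :
    Prop :=
  ∃ c : ℝ, c ≠ 0 ∧ ∀ X, chainB B n P X = c • X

/-! On the tangent line `W` both forms have `R` in their radical, and `W` is spanned by `R` and
any `Pᵢ`; so `B = κ ⟨·,·⟩` on `W`, every `B`-reversion in a point of `W` is `κ` times the
Minkowski one there, and the `B`-chain acts on `W` as a nonzero scalar `d`. The `B`-chain is
conformal for `B` with factor `∏ B(Pᵢ,Pᵢ)²`, which evaluating at `P₁` shows to be `d²`. Such a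
map `M` is `d` everywhere: `M x - d x` is `B`-orthogonal to `W`, hence a multiple `a R`, and
comparing `B(M x, M x)` with `d² B(x, x)` gives `2 d a B(R, x) = 0`, while `B(R, x) ≠ 0` off `W`
since `W` is the `B`-orthogonal of `R`. -/

open Module Submodule
open LinearMap (BilinForm)

theorem exists_bilinForm_eq_of_add_smul_left {R M : Type*} [CommRing R] [AddCommGroup M]
    [Module R M] {B : M → M → R}
    (hB : ∀ (c : R) (x x' y : M), B (c • x + x') y = c * B x y + B x' y)
    (hB_comm : ∀ x y, B x y = B y x) : ∃ β : BilinForm R M, (β · ·) = B := by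
  have hzero (y : M) : B 0 y = 0 := by simpa using hB 1 0 0 y
  have hadd (x x' y : M) : B (x + x') y = B x y + B x' y := by simpa using hB 1 x x' y
  have hsmul (c : R) (x y : M) : B (c • x) y = c * B x y := by simpa [hzero] using hB c x 0 y
  refine ⟨LinearMap.mk₂ R B hadd hsmul (fun x y y' => ?_) (fun c x y => ?_), rfl⟩
  · rw [hB_comm, hadd, hB_comm y, hB_comm y']
  · rw [hB_comm, hsmul, hB_comm, smul_eq_mul]

namespace LinearMap.BilinForm

variable {K V : Type*} [Field K] [AddCommGroup V] [Module K V]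
variable {β γ : BilinForm K V} {W : Submodule K V} {R Q : V}

theorem span_pair_eq_of_finrank_eq_two (hW : finrank K W = 2) (hR : R ∈ W) (hR0 : R ≠ 0)
    (hγR : ∀ x ∈ W, γ R x = 0) (hQ : Q ∈ W) (hγQ : γ Q Q ≠ 0) : span K {R, Q} = W := by
  have hindep : LinearIndependent K ![R, Q] := by
    rw [LinearIndependent.pair_iff]
    intro s t hst
    have ht : t * γ Q Q = 0 := by
      simpa [hγR Q hQ] using congrArg (γ · Q) hst
    obtain rfl : t = 0 := (mul_eq_zero.1 ht).resolve_right hγQ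
    simpa [hR0] using hst
  have : FiniteDimensional K W := Module.finite_of_finrank_eq_succ hW
  refine eq_of_le_of_finrank_eq ?_ ?_
  · simp [span_le, Set.insert_subset_iff, hR, hQ]
  · rw [hW, ← Matrix.range_cons_cons_empty R Q ![], finrank_span_eq_card hindep]
    simp

theorem apply_eq_div_mul_apply_of_finrank_eq_two (hβ : β.IsSymm) (hγ : γ.IsSymm)
    (hW : finrank K W = 2) (hR : R ∈ W) (hR0 : R ≠ 0)
    (hβR : ∀ x ∈ W, β R x = 0) (hγR : ∀ x ∈ W, γ R x = 0) (hQ : Q ∈ W) (hγQ : γ Q Q ≠ 0) :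
    ∀ x ∈ W, ∀ y ∈ W, β x y = β Q Q / γ Q Q * γ x y := by
  have hform (δ : BilinForm K V) (hδ : δ.IsSymm) (hδR : ∀ x ∈ W, δ R x = 0) (a b a' b' : K) :
      δ (a • R + b • Q) (a' • R + b' • Q) = b * b' * δ Q Q := by
    simp [hδR R hR, hδR Q hQ, hδ.eq Q R, mul_assoc]
  intro x hx y hy
  rw [← span_pair_eq_of_finrank_eq_two hW hR hR0 hγR hQ hγQ, mem_span_pair] at hx hy
  obtain ⟨a, b, rfl⟩ := hx
  obtain ⟨a', b', rfl⟩ := hy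
  rw [hform β hβ hβR, hform γ hγ hγR]
  field_simp

variable [FiniteDimensional K V]

theorem orthogonal_eq_span_singleton (hnd : β.Nondegenerate) (hW : finrank K W + 1 = finrank K V)
    (hR0 : R ≠ 0) (hRW : R ∈ β.orthogonal W) : β.orthogonal W = K ∙ R := by
  refine (eq_of_le_of_finrank_eq ((span_singleton_le_iff_mem R _).2 hRW) ?_).symm
  rw [finrank_span_singleton hR0, finrank_orthogonal hnd]
  omega

theorem orthogonal_span_singleton_eq (hnd : β.Nondegenerate)
    (hW : finrank K W + 1 = finrank K V) (hR0 : R ≠ 0) (hβR : ∀ x ∈ W, β R x = 0) :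
    β.orthogonal (K ∙ R) = W := by
  refine (eq_of_le_of_finrank_eq (fun x hx => ?_) ?_).symm
  · rw [mem_orthogonal_iff]
    intro y hy
    obtain ⟨a, rfl⟩ := mem_span_singleton.1 hy
    simp [hβR x hx]
  · rw [finrank_orthogonal hnd, finrank_span_singleton hR0]
    omega

theorem apply_eq_smul_of_conformal [NeZero (2 : K)] (hβ : β.IsSymm) (hnd : β.Nondegenerate)
    (hW : finrank K W + 1 = finrank K V) (hR : R ∈ W) (hR0 : R ≠ 0) (hβR : ∀ x ∈ W, β R x = 0)
    {M : V → V} {d : K} (hd : d ≠ 0) (hMW : ∀ x ∈ W, M x = d • x)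
    (hM : ∀ x y, β (M x) (M y) = d ^ 2 * β x y) (x : V) : M x = d • x := by
  by_cases hx : x ∈ W
  · exact hMW x hx
  have hRx : β R x ≠ 0 := fun h => hx <| by
    rw [← orthogonal_span_singleton_eq hnd hW hR0 hβR, mem_orthogonal_iff]
    intro y hy
    obtain ⟨a, rfl⟩ := mem_span_singleton.1 hy
    simp [h]
  have hperp : M x - d • x ∈ β.orthogonal W := by
    intro w hw
    have h : d * β w (M x) = d * (d * β w x) :=
      calc d * β w (M x) = β (M w) (M x) := by simp [hMW w hw]
        _ = d * (d * β w x) := by rw [hM]; ring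
    simp [mul_left_cancel₀ hd h]
  have hRW : R ∈ β.orthogonal W := fun w hw => by rw [hβ.eq]; exact hβR w hw
  rw [orthogonal_eq_span_singleton hnd hW hR0 hRW, mem_span_singleton] at hperp
  obtain ⟨a, ha⟩ := hperp
  rw [eq_sub_iff_add_eq] at ha
  have h2a : 2 * d * β R x * a = 0 := by
    have h := hM x x
    rw [← ha] at h
    simp only [map_add, map_smul, LinearMap.add_apply, LinearMap.smul_apply, smul_eq_mul,
      hβR R hR, hβ.eq x R] at h
    linear_combination h
  have ha0 : a = 0 := (mul_eq_zero.1 h2a).resolve_left (by simp [hd, hRx, two_ne_zero])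
  simpa [ha0] using ha.symm

end LinearMap.BilinForm

section Reversion

variable {β : BilinForm ℝ (Fin 3 → ℝ)}

theorem chainB_mem {B : (Fin 3 → ℝ) → (Fin 3 → ℝ) → ℝ} {W : Submodule ℝ (Fin 3 → ℝ)}
    {n : ℕ} {P : Fin n → Fin 3 → ℝ} (hP : ∀ i, P i ∈ W) {x : Fin 3 → ℝ} (hx : x ∈ W) :
    chainB B n P x ∈ W := by
  induction n with
  | zero => exact hx
  | succ k ih =>
    exact sub_mem (smul_mem _ _ (ih fun i => hP _)) (smul_mem _ _ (hP _))

theorem apply_revB_revB (hβ : β.IsSymm) (P x y : Fin 3 → ℝ) :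
    β (revB (β · ·) P x) (revB (β · ·) P y) = β P P ^ 2 * β x y := by
  simp only [revB, map_sub, map_smul, LinearMap.sub_apply, LinearMap.smul_apply, smul_eq_mul,
    hβ.eq P y]
  ring

theorem apply_chainB_chainB (hβ : β.IsSymm) {n : ℕ} (P : Fin n → Fin 3 → ℝ) (x y : Fin 3 → ℝ) :
    β (chainB (β · ·) n P x) (chainB (β · ·) n P y) = (∏ i, β (P i) (P i) ^ 2) * β x y := by
  induction n with
  | zero => simp [chainB]
  | succ k ih =>
    rw [chainB, chainB, apply_revB_revB hβ, ih, Fin.prod_univ_castSucc]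
    ring

theorem chainB_eq_pow_smul {γ : BilinForm ℝ (Fin 3 → ℝ)} {W : Submodule ℝ (Fin 3 → ℝ)}
    {κ : ℝ} (hβγ : ∀ x ∈ W, ∀ y ∈ W, β x y = κ * γ x y) {n : ℕ} {P : Fin n → Fin 3 → ℝ}
    (hP : ∀ i, P i ∈ W) {x : Fin 3 → ℝ} (hx : x ∈ W) :
    chainB (β · ·) n P x = κ ^ n • chainB (γ · ·) n P x := by
  induction n with
  | zero => simp [chainB]
  | succ k ih =>
    have hPk := hP (Fin.last k)
    rw [chainB, chainB, ih fun i => hP _]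
    simp only [revB, map_smul, LinearMap.smul_apply, smul_eq_mul, hβγ _ hPk _ hPk,
      hβγ _ (chainB_mem (fun i => hP _) hx) _ hPk]
    module

end Reversion

theorem mink_add_smul_left (c : ℝ) (x x' y : Fin 3 → ℝ) :
    mink (c • x + x') y = c * mink x y + mink x' y := by
  simp only [mink, Pi.add_apply, Pi.smul_apply, smul_eq_mul]
  ring

theorem mink_comm (x y : Fin 3 → ℝ) : mink x y = mink y x := by
  simp only [mink]
  ring

theorem closing_transfer_tangent_general
    (W : Submodule ℝ (Fin 3 → ℝ)) (hdim : Module.finrank ℝ W = 2)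
    (R : Fin 3 → ℝ) (hR : R ∈ W) (hR0 : R ≠ 0)
    (hRtang : ∀ X ∈ W, mink R X = 0)
    (n : ℕ) (P : Fin (2 * n) → (Fin 3 → ℝ))
    (hPW : ∀ i, P i ∈ W)
    (hPC : ∀ i, mink (P i) (P i) ≠ 0)
    (hclose : closesB mink (2 * n) P)
    (B : (Fin 3 → ℝ) → (Fin 3 → ℝ) → ℝ)
    (hBlin : ∀ (c : ℝ) (x x' y : Fin 3 → ℝ), B (c • x + x') y = c * B x y + B x' y)
    (hBsymm : ∀ x y, B x y = B y x)
    (hBnd : ∀ x, (∀ y, B x y = 0) → x = 0)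
    (hBtang : ∀ X ∈ W, B R X = 0)
    (hBP : ∀ i, B (P i) (P i) ≠ 0) :
    closesB B (2 * n) P := by
  obtain ⟨β, rfl⟩ := exists_bilinForm_eq_of_add_smul_left hBlin hBsymm
  obtain ⟨μ, hμ⟩ := exists_bilinForm_eq_of_add_smul_left mink_add_smul_left mink_comm
  simp only [← hμ] at hRtang hPC hclose
  have hβ : β.IsSymm := ⟨hBsymm⟩
  have hμs : μ.IsSymm := ⟨by simpa only [← hμ] using mink_comm⟩
  have hnd : β.Nondegenerate := hβ.isRefl.nondegenerate_iff_separatingLeft.2 hBnd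
  rcases n.eq_zero_or_pos with rfl | hn
  · exact ⟨1, one_ne_zero, fun x => (one_smul ℝ x).symm⟩
  obtain ⟨i₀⟩ : Nonempty (Fin (2 * n)) := ⟨⟨0, by omega⟩⟩
  set Q := P i₀
  obtain ⟨c, hc, hchain⟩ := hclose
  set d := (β Q Q / μ Q Q) ^ (2 * n) * c
  have hd : d ≠ 0 := mul_ne_zero (pow_ne_zero _ (div_ne_zero (hBP i₀) (hPC i₀))) hc
  have hκ := β.apply_eq_div_mul_apply_of_finrank_eq_two hβ hμs hdim hR hR0 hBtang hRtang
    (hPW i₀) (hPC i₀)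
  have hMW : ∀ x ∈ W, chainB (β · ·) (2 * n) P x = d • x := fun x hx => by
    rw [chainB_eq_pow_smul hκ hPW hx, hchain, smul_smul]
  have hconf : ∏ i, β (P i) (P i) ^ 2 = d ^ 2 := by
    have h := apply_chainB_chainB hβ P Q Q
    rw [hMW Q (hPW i₀)] at h
    simp only [map_smul, LinearMap.smul_apply, smul_eq_mul] at h
    exact mul_right_cancel₀ (hBP i₀) (by linear_combination -h)
  refine ⟨d, hd, β.apply_eq_smul_of_conformal hβ hnd ?_ hR hR0 hBtang hd hMW ?_⟩
  · simp [hdim]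
  · intro x y; rw [apply_chainB_chainB hβ, hconf]

/-- **Transfer of the closing property to conics tangent at the same point.**
If the line `W` is tangent to the conic `C` at `R` and `P 0, …, P (2n-1)` on `W` have
the closing property with respect to the Minkowski form, then they have the closing
property with respect to any nondegenerate symmetric bilinear form `B` whose conic is
tangent to `W` at `R`, provided the `P i` are off the corresponding conic. -/
theorem closing_transfer_tangent
    (W : Submodule ℝ (Fin 3 → ℝ)) (hdim : Module.finrank ℝ W = 2)
    (R : Fin 3 → ℝ) (hR : R ∈ W) (hR0 : R ≠ 0) (hRC : mink R R = 0)
    (hRtang : ∀ X ∈ W, mink R X = 0)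
    (n : ℕ) (P : Fin (2 * n) → (Fin 3 → ℝ))
    (hPW : ∀ i, P i ∈ W)
    (hPC : ∀ i, mink (P i) (P i) ≠ 0)
    (hclose : closesB mink (2 * n) P)
    (B : (Fin 3 → ℝ) → (Fin 3 → ℝ) → ℝ)
    (hBlin : ∀ (c : ℝ) (x x' y : Fin 3 → ℝ), B (c • x + x') y = c * B x y + B x' y)
    (hBsymm : ∀ x y, B x y = B y x)
    (hBnd : ∀ x, (∀ y, B x y = 0) → x = 0)
    (hBR : B R R = 0) (hBtang : ∀ X ∈ W, B R X = 0)
    (hBP : ∀ i, B (P i) (P i) ≠ 0) :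
    closesB B (2 * n) P :=
  closing_transfer_tangent_general W hdim R hR hR0 hRtang n P hPW hPC hclose B hBlin hBsymm hBnd
    hBtang hBP
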